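/- Let N be an odd positive integer, θ ∈ (0, π/2), k ∈ {0, 1, …, 2N−1}, λ_k = exp(πik/N), C = 2N/(1 + (−1)^k·cos^N θ), and let ρ_k be the 2×2 matrix with entries (ρ_k)_{c,c'} = (1/C)·Σ_{n=0}^{N−1} v_c(n)·conj(v_{c'}(n)), where v_0(n) = a_n(λ_k) and v_1(n) = b_n(λ_k). Then the linear entropy satisfies 1 − Tr(ρ_k²) = (1 − cos^(2N−2)θ)/2. -/

import Mathlib

open Complex

/-- `ω = exp(2πi/N)`. -/
noncomputable def omegaN (N : ℕ) : ℂ := Complex.exp (2 * Real.pi * Complex.I / N)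

/-- `a_n(λ) = ω^(−n(n−1)/2) · ∏_{j=0}^{n−1} (1 + λ⁻¹ωʲ/cosθ)/(1 + λω⁻ʲ/cosθ)`. -/
noncomputable def aCoef (N : ℕ) (θ : ℝ) (lam : ℂ) (n : ℕ) : ℂ :=
  (omegaN N)⁻¹ ^ (n * (n - 1) / 2) *
    ∏ j ∈ Finset.range n,
      (1 + lam⁻¹ * omegaN N ^ j / (Real.cos θ : ℂ)) /
      (1 + lam * (omegaN N)⁻¹ ^ j / (Real.cos θ : ℂ))

/-- `b_n(λ) = a_n(λ)·tanθ/(1 + λω⁻ⁿ/cosθ)`. -/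
noncomputable def bCoef (N : ℕ) (θ : ℝ) (lam : ℂ) (n : ℕ) : ℂ :=
  aCoef N θ lam n * (Real.tan θ : ℂ) / (1 + lam * (omegaN N)⁻¹ ^ n / (Real.cos θ : ℂ))

/-- The reduced density matrix of the coin in the normalized eigenstate with
eigenvalue `λ`: `(ρ)_{c,c'} = (1/C)·Σ_{n<N} v_c(n)·conj(v_{c'}(n))` where
`v_0(n) = a_n(λ)` and `v_1(n) = b_n(λ)`. -/
noncomputable def coinRho (N : ℕ) (θ : ℝ) (lam : ℂ) (C : ℂ) :
    Matrix (Fin 2) (Fin 2) ℂ := fun c c' =>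
  (1 / C) * ∑ n ∈ Finset.range N,
    (if c = 0 then aCoef N θ lam n else bCoef N θ lam n) *
      (starRingEnd ℂ) (if c' = 0 then aCoef N θ lam n else bCoef N θ lam n)

/-!
Every factor of `a_n` has the form `conj d / d` with `d = 1 + λω⁻ʲ/cos θ`, so `|a_n| = 1`, and
partial fractions turn `|b_n|² = tan²θ/|d_n|²` into `1/(1 + z cos θ) - cos θ/(cos θ + z)` with
`z = λω⁻ⁿ`. Hence all entries of `ρ` are sums of `1/(x + yζⁿ)` over the `N`-th roots of unity,
which for odd `N` equal `N x^(N-1)/(x^N + y^N)`. Since `λ^N = (-1)^k`, this gives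
`ρ = (1 + r·σ)/2` with Bloch vector `r = (-1)^k cos^N θ (tan θ, 0, 1)`, and
`1 - Tr ρ² = (1 - |r|²)/2` with `|r|² = cos^(2N-2) θ`.
-/

open Finset ComplexConjugate

namespace IsPrimitiveRoot

variable {K : Type*} [Field K] {ζ : K} {N : ℕ}

theorem sum_pow_pow_eq_zero (hζ : IsPrimitiveRoot ζ N) {i : ℕ} (hi0 : 0 < i) (hiN : i < N) :
    ∑ n ∈ range N, (ζ ^ i) ^ n = 0 := by
  rw [geom_sum_eq (hζ.pow_ne_one_of_pos_of_lt hi0.ne' hiN), ← pow_mul, mul_comm, pow_mul,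
    hζ.pow_eq_one, one_pow, sub_self, zero_div]

theorem sum_inv_sub_mul_pow (hζ : IsPrimitiveRoot ζ N) (hN : 0 < N) {x y : K}
    (hxy : x ^ N ≠ y ^ N) :
    ∑ n ∈ range N, (x - y * ζ ^ n)⁻¹ = N * x ^ (N - 1) / (x ^ N - y ^ N) := by
  have hxy' : x ^ N - y ^ N ≠ 0 := sub_ne_zero.mpr hxy
  have hterm (n : ℕ) : (x - y * ζ ^ n)⁻¹
      = (∑ i ∈ range N, y ^ i * x ^ (N - 1 - i) * (ζ ^ i) ^ n) / (x ^ N - y ^ N) := by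
    have hgeom := geom_sum₂_mul x (y * ζ ^ n) N
    rw [geom_sum₂_comm, mul_pow, ← pow_mul, mul_comm n N, pow_mul, hζ.pow_eq_one, one_pow,
      mul_one] at hgeom
    have hne : x - y * ζ ^ n ≠ 0 := by
      rintro h; rw [h, mul_zero] at hgeom; exact hxy' hgeom.symm
    rw [eq_div_iff hxy', ← hgeom, inv_mul_eq_div, mul_div_cancel_right₀ _ hne]
    exact sum_congr rfl fun i _ => by ring
  rw [sum_congr rfl fun n _ => hterm n, ← sum_div, sum_comm]
  simp_rw [← mul_sum]
  rw [sum_eq_single_of_mem 0 (mem_range.mpr hN)]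
  · simp [mul_comm]
  · intro i hi hi0
    rw [hζ.sum_pow_pow_eq_zero (Nat.pos_of_ne_zero hi0) (mem_range.mp hi), mul_zero]

theorem sum_inv_add_mul_pow_of_odd (hζ : IsPrimitiveRoot ζ N) (hN : Odd N) {x y : K}
    (hxy : x ^ N + y ^ N ≠ 0) :
    ∑ n ∈ range N, (x + y * ζ ^ n)⁻¹ = N * x ^ (N - 1) / (x ^ N + y ^ N) := by
  have hxy' : x ^ N ≠ (-y) ^ N := by
    rw [hN.neg_pow]; exact fun h => hxy (by linear_combination h)
  simpa [hN.neg_pow] using hζ.sum_inv_sub_mul_pow hN.pos hxy'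

end IsPrimitiveRoot

theorem abs_pow_ne_one {x : ℝ} (hx : |x| ≠ 1) {n : ℕ} (hn : n ≠ 0) : |x ^ n| ≠ 1 := by
  rwa [abs_pow, Ne, pow_eq_one_iff_of_nonneg (abs_nonneg _) hn]

theorem ofReal_add_ne_zero_of_abs_ne_one {c : ℝ} (hc : |c| ≠ 1) {z : ℂ} (hz : ‖z‖ = 1) :
    (c : ℂ) + z ≠ 0 := fun h => hc <| by
  simpa [hz] using congrArg norm (eq_neg_of_add_eq_zero_left h)

theorem one_add_ofReal_mul_ne_zero_of_abs_ne_one {c : ℝ} (hc : |c| ≠ 1) {z : ℂ}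
    (hz : ‖z‖ = 1) : 1 + (c : ℂ) * z ≠ 0 := fun h => hc <| by
  simpa [hz] using congrArg norm (eq_neg_of_add_eq_zero_right h)

theorem ofReal_tan_sq (θ : ℝ) :
    (Real.tan θ : ℂ) ^ 2 = (1 - (Real.cos θ : ℂ) ^ 2) / (Real.cos θ : ℂ) ^ 2 := by
  have h : Real.tan θ ^ 2 = (1 - Real.cos θ ^ 2) / Real.cos θ ^ 2 := by
    rw [Real.tan_eq_sin_div_cos, div_pow, Real.sin_sq]
  exact_mod_cast h

theorem norm_omegaN (N : ℕ) : ‖omegaN N‖ = 1 := by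
  simp [omegaN, Complex.norm_exp]

theorem isPrimitiveRoot_omegaN {N : ℕ} (hN : N ≠ 0) : IsPrimitiveRoot (omegaN N) N :=
  Complex.isPrimitiveRoot_exp N hN

noncomputable def coinDenom (N : ℕ) (θ : ℝ) (lam : ℂ) (n : ℕ) : ℂ :=
  1 + lam * (omegaN N)⁻¹ ^ n / (Real.cos θ : ℂ)

section Coefficients

variable {N : ℕ} {θ : ℝ} {lam : ℂ}

theorem norm_lam_mul_omegaN_inv_pow (hlam : ‖lam‖ = 1) (n : ℕ) :
    ‖lam * (omegaN N)⁻¹ ^ n‖ = 1 := by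
  simp [hlam, norm_omegaN]

theorem conj_coinDenom (hlam : ‖lam‖ = 1) (n : ℕ) :
    conj (coinDenom N θ lam n) = 1 + lam⁻¹ * omegaN N ^ n / (Real.cos θ : ℂ) := by
  simp only [coinDenom, map_add, map_one, map_div₀, map_mul, map_pow, Complex.conj_ofReal,
    ← Complex.inv_eq_conj hlam, ← Complex.inv_eq_conj (norm_omegaN N), map_inv₀, inv_inv]

theorem coinDenom_eq (hc0 : Real.cos θ ≠ 0) (n : ℕ) :
    coinDenom N θ lam n
      = ((Real.cos θ : ℂ) + lam * (omegaN N)⁻¹ ^ n) / (Real.cos θ : ℂ) := by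
  rw [coinDenom, add_div, div_self (Complex.ofReal_ne_zero.mpr hc0)]

theorem coinDenom_ne_zero (hlam : ‖lam‖ = 1) (hc0 : Real.cos θ ≠ 0) (hc1 : |Real.cos θ| ≠ 1)
    (n : ℕ) : coinDenom N θ lam n ≠ 0 := by
  rw [coinDenom_eq hc0]
  exact div_ne_zero (ofReal_add_ne_zero_of_abs_ne_one hc1 (norm_lam_mul_omegaN_inv_pow hlam n))
    (Complex.ofReal_ne_zero.mpr hc0)

theorem aCoef_eq_prod_conj_div (hlam : ‖lam‖ = 1) (n : ℕ) :
    aCoef N θ lam n = (omegaN N)⁻¹ ^ (n * (n - 1) / 2) *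
      ∏ j ∈ range n, conj (coinDenom N θ lam j) / coinDenom N θ lam j := by
  simp only [conj_coinDenom hlam]
  rfl

theorem norm_aCoef (hlam : ‖lam‖ = 1) (hc0 : Real.cos θ ≠ 0) (hc1 : |Real.cos θ| ≠ 1)
    (n : ℕ) : ‖aCoef N θ lam n‖ = 1 := by
  have hfactor (j : ℕ) : ‖conj (coinDenom N θ lam j) / coinDenom N θ lam j‖ = 1 := by
    rw [norm_div, Complex.norm_conj,
      div_self (norm_ne_zero_iff.mpr (coinDenom_ne_zero hlam hc0 hc1 j))]
  rw [aCoef_eq_prod_conj_div hlam, norm_mul, norm_pow, norm_inv, norm_omegaN, inv_one, one_pow,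
    one_mul, norm_prod]
  exact prod_eq_one fun j _ => hfactor j

theorem aCoef_mul_conj_aCoef (hlam : ‖lam‖ = 1) (hc0 : Real.cos θ ≠ 0)
    (hc1 : |Real.cos θ| ≠ 1) (n : ℕ) : aCoef N θ lam n * conj (aCoef N θ lam n) = 1 := by
  rw [Complex.mul_conj', norm_aCoef hlam hc0 hc1, Complex.ofReal_one, one_pow]

theorem bCoef_mul_conj_aCoef (hlam : ‖lam‖ = 1) (hc0 : Real.cos θ ≠ 0)
    (hc1 : |Real.cos θ| ≠ 1) (n : ℕ) :
    bCoef N θ lam n * conj (aCoef N θ lam n) = Real.tan θ / coinDenom N θ lam n := by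
  rw [bCoef, ← coinDenom, div_mul_eq_mul_div, mul_right_comm,
    aCoef_mul_conj_aCoef hlam hc0 hc1, one_mul]

theorem bCoef_mul_conj_bCoef (hlam : ‖lam‖ = 1) (hc0 : Real.cos θ ≠ 0)
    (hc1 : |Real.cos θ| ≠ 1) (n : ℕ) :
    bCoef N θ lam n * conj (bCoef N θ lam n)
      = 1 / (1 + Real.cos θ * (lam * (omegaN N)⁻¹ ^ n))
        - Real.cos θ / (Real.cos θ + lam * (omegaN N)⁻¹ ^ n) := by
  set c : ℂ := (Real.cos θ : ℂ)
  set z := lam * (omegaN N)⁻¹ ^ n with hz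
  have hz1 : ‖z‖ = 1 := norm_lam_mul_omegaN_inv_pow hlam n
  have hc' : c ≠ 0 := Complex.ofReal_ne_zero.mpr hc0
  have hz0 : z ≠ 0 := norm_ne_zero_iff.mp (by rw [hz1]; exact one_ne_zero)
  have hcz : c + z ≠ 0 := ofReal_add_ne_zero_of_abs_ne_one hc1 hz1
  have hcz' : 1 + c * z ≠ 0 := one_add_ofReal_mul_ne_zero_of_abs_ne_one hc1 hz1
  have hconj : conj (coinDenom N θ lam n) = 1 + z⁻¹ / c := by
    rw [conj_coinDenom hlam, hz, mul_inv, inv_pow, inv_inv]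
  calc bCoef N θ lam n * conj (bCoef N θ lam n)
      = aCoef N θ lam n * conj (aCoef N θ lam n) * (Real.tan θ : ℂ) ^ 2
          / (coinDenom N θ lam n * conj (coinDenom N θ lam n)) := by
        rw [bCoef, ← coinDenom]
        simp only [map_div₀, map_mul, Complex.conj_ofReal]
        ring
    _ = (1 - c ^ 2) / c ^ 2 / ((1 + z / c) * (1 + z⁻¹ / c)) := by
        rw [aCoef_mul_conj_aCoef hlam hc0 hc1, one_mul, ofReal_tan_sq θ, hconj]
        rfl
    _ = 1 / (1 + c * z) - c / (c + z) := by
        have e1 : 1 + z / c = (c + z) / c := by field_simp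
        have e2 : 1 + z⁻¹ / c = (1 + c * z) / (c * z) := by field_simp; ring
        rw [e1, e2]
        field_simp
        ring

theorem sum_cos_div_cos_add (hN : Odd N) (hlam : ‖lam‖ = 1) (hc1 : |Real.cos θ| ≠ 1) :
    ∑ n ∈ range N, (Real.cos θ : ℂ) / (Real.cos θ + lam * (omegaN N)⁻¹ ^ n)
      = Real.cos θ ^ N * N / (Real.cos θ ^ N + lam ^ N) := by
  have hN0 : N ≠ 0 := hN.pos.ne'
  have hden : (Real.cos θ : ℂ) ^ N + lam ^ N ≠ 0 := by
    rw [← Complex.ofReal_pow]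
    exact ofReal_add_ne_zero_of_abs_ne_one (abs_pow_ne_one hc1 hN0) (by rw [norm_pow, hlam, one_pow])
  simp_rw [div_eq_mul_inv, ← mul_sum]
  rw [(isPrimitiveRoot_omegaN hN0).inv.sum_inv_add_mul_pow_of_odd hN hden,
    ← mul_pow_sub_one hN0 (Real.cos θ : ℂ)]
  ring

theorem sum_one_div_one_add_cos_mul (hN : Odd N) (hlam : ‖lam‖ = 1)
    (hc1 : |Real.cos θ| ≠ 1) :
    ∑ n ∈ range N, 1 / (1 + Real.cos θ * (lam * (omegaN N)⁻¹ ^ n))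
      = N / (1 + Real.cos θ ^ N * lam ^ N) := by
  have hN0 : N ≠ 0 := hN.pos.ne'
  have hden : (1 : ℂ) ^ N + (Real.cos θ * lam) ^ N ≠ 0 := by
    rw [one_pow, mul_pow, ← Complex.ofReal_pow]
    exact one_add_ofReal_mul_ne_zero_of_abs_ne_one (abs_pow_ne_one hc1 hN0) (by rw [norm_pow, hlam, one_pow])
  simp_rw [one_div, ← mul_assoc]
  rw [(isPrimitiveRoot_omegaN hN0).inv.sum_inv_add_mul_pow_of_odd hN hden, one_pow, one_pow,
    mul_one, mul_pow]

theorem sum_aCoef_mul_conj_aCoef (hlam : ‖lam‖ = 1) (hc0 : Real.cos θ ≠ 0)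
    (hc1 : |Real.cos θ| ≠ 1) :
    ∑ n ∈ range N, aCoef N θ lam n * conj (aCoef N θ lam n) = N := by
  simp [aCoef_mul_conj_aCoef hlam hc0 hc1]

theorem sum_bCoef_mul_conj_aCoef (hN : Odd N) (hlam : ‖lam‖ = 1) (hc0 : Real.cos θ ≠ 0)
    (hc1 : |Real.cos θ| ≠ 1) :
    ∑ n ∈ range N, bCoef N θ lam n * conj (aCoef N θ lam n)
      = Real.tan θ * (Real.cos θ ^ N * N / (Real.cos θ ^ N + lam ^ N)) := by
  rw [← sum_cos_div_cos_add hN hlam hc1, mul_sum]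
  refine sum_congr rfl fun n _ => ?_
  rw [bCoef_mul_conj_aCoef hlam hc0 hc1, coinDenom_eq hc0, div_div_eq_mul_div, mul_div_assoc]

theorem sum_bCoef_mul_conj_bCoef (hN : Odd N) (hlam : ‖lam‖ = 1) (hc0 : Real.cos θ ≠ 0)
    (hc1 : |Real.cos θ| ≠ 1) :
    ∑ n ∈ range N, bCoef N θ lam n * conj (bCoef N θ lam n)
      = N / (1 + Real.cos θ ^ N * lam ^ N) - Real.cos θ ^ N * N / (Real.cos θ ^ N + lam ^ N) := by
  simp_rw [bCoef_mul_conj_bCoef hlam hc0 hc1]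
  rw [sum_sub_distrib, sum_one_div_one_add_cos_mul hN hlam hc1, sum_cos_div_cos_add hN hlam hc1]

end Coefficients

theorem coinRho_eq_smul (N : ℕ) (θ : ℝ) (lam C : ℂ) :
    coinRho N θ lam C = (1 / C) •
      !![∑ n ∈ range N, aCoef N θ lam n * conj (aCoef N θ lam n),
          ∑ n ∈ range N, aCoef N θ lam n * conj (bCoef N θ lam n);
        ∑ n ∈ range N, bCoef N θ lam n * conj (aCoef N θ lam n),
          ∑ n ∈ range N, bCoef N θ lam n * conj (bCoef N θ lam n)] := by
  ext i j
  fin_cases i <;> fin_cases j <;> simp [coinRho]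

theorem coinRho_eq_of_pow_eq {N : ℕ} (hN : Odd N) {θ : ℝ} (hc0 : Real.cos θ ≠ 0)
    (hc1 : |Real.cos θ| ≠ 1) {lam s : ℂ} (hs : s = 1 ∨ s = -1) (hlamN : lam ^ N = s) :
    coinRho N θ lam (2 * N / (1 + s * (Real.cos θ : ℂ) ^ N)) =
      !![(1 + s * Real.cos θ ^ N) / 2, s * Real.tan θ * Real.cos θ ^ N / 2;
        s * Real.tan θ * Real.cos θ ^ N / 2, (1 - s * Real.cos θ ^ N) / 2] := by
  have hN0 : N ≠ 0 := hN.pos.ne'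
  have hs1 : ‖s‖ = 1 := by rcases hs with rfl | rfl <;> simp
  have hlam : ‖lam‖ = 1 := by
    rwa [← pow_eq_one_iff_of_nonneg (norm_nonneg lam) hN0, ← norm_pow, hlamN]
  have hsconj : conj s = s := by rcases hs with rfl | rfl <;> simp
  have hs2 : s ^ 2 = 1 := by rcases hs with rfl | rfl <;> norm_num
  have hcN := abs_pow_ne_one hc1 hN0
  have h1 : 1 + s * (Real.cos θ : ℂ) ^ N ≠ 0 := by
    rw [mul_comm, ← Complex.ofReal_pow]; exact one_add_ofReal_mul_ne_zero_of_abs_ne_one hcN hs1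
  have h2 : (Real.cos θ : ℂ) ^ N + s ≠ 0 := by
    rw [← Complex.ofReal_pow]; exact ofReal_add_ne_zero_of_abs_ne_one hcN hs1
  have hN' : (N : ℂ) ≠ 0 := Nat.cast_ne_zero.mpr hN0
  have hba := sum_bCoef_mul_conj_aCoef hN hlam hc0 hc1
  have hab : ∑ n ∈ range N, aCoef N θ lam n * conj (bCoef N θ lam n)
      = Real.tan θ * (Real.cos θ ^ N * N / (Real.cos θ ^ N + lam ^ N)) := by
    rw [← Complex.conj_conj (∑ n ∈ range N, _), map_sum]
    simp only [map_mul, Complex.conj_conj, mul_comm (conj (aCoef N θ lam _)), hba, hlamN]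
    simp only [map_mul, map_div₀, map_pow, map_add, map_natCast, Complex.conj_ofReal, hsconj]
  rw [coinRho_eq_smul, sum_aCoef_mul_conj_aCoef hlam hc0 hc1, hab, hba,
    sum_bCoef_mul_conj_bCoef hN hlam hc0 hc1, hlamN]
  generalize (Real.cos θ : ℂ) ^ N = x at h1 h2 ⊢
  generalize (Real.tan θ : ℂ) = t
  ext i j
  fin_cases i <;> fin_cases j <;> simp
  · field_simp
  · field_simp
    linear_combination (-t * x) * hs2
  · field_simp
    linear_combination (-t * x) * hs2
  · rw [mul_comm x s]
    field_simp
    linear_combination x * hs2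

theorem one_sub_trace_mul_self_of_bloch {K : Type*} [Field K] [NeZero (2 : K)] (x y : K) :
    1 - (!![(1 + x) / 2, y / 2; y / 2, (1 - x) / 2] *
      !![(1 + x) / 2, y / 2; y / 2, (1 - x) / 2]).trace = (1 - (x ^ 2 + y ^ 2)) / 2 := by
  rw [Matrix.mul_fin_two, Matrix.trace_fin_two_of]
  field_simp
  ring

theorem psw_coin_rho_linear_entropy_general (N : ℕ) (hN : Odd N)
    (θ : ℝ) (hθ : θ ∈ Set.Ioo 0 (Real.pi / 2))
    (k : ℕ)
    (lam : ℂ) (hlam : lam = Complex.exp (Real.pi * Complex.I * k / N))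
    (C : ℂ) (hC : C = 2 * N / (1 + (-1 : ℂ) ^ k * (Real.cos θ : ℂ) ^ N)) :
    1 - (coinRho N θ lam C * coinRho N θ lam C).trace
      = (((1 - Real.cos θ ^ (2 * N - 2)) / 2 : ℝ) : ℂ) := by
  have hN0 : N ≠ 0 := hN.pos.ne'
  have hc0 : 0 < Real.cos θ := Real.cos_pos_of_mem_Ioo ⟨by linarith [hθ.1, Real.pi_pos], hθ.2⟩
  have hc1 : Real.cos θ < 1 := by
    simpa using Real.cos_lt_cos_of_nonneg_of_le_pi le_rfl (by linarith [hθ.2, Real.pi_pos]) hθ.1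
  have hlamN : lam ^ N = (-1) ^ k := by
    rw [hlam, ← Complex.exp_nat_mul, mul_div_cancel₀ _ (Nat.cast_ne_zero.mpr hN0), mul_comm,
      Complex.exp_nat_mul, Complex.exp_pi_mul_I]
  have hbloch : ((-1) ^ k * (Real.cos θ : ℂ) ^ N) ^ 2
      + ((-1) ^ k * Real.tan θ * (Real.cos θ : ℂ) ^ N) ^ 2 = (Real.cos θ : ℂ) ^ (2 * N - 2) := by
    have hc : (Real.cos θ : ℂ) ≠ 0 := Complex.ofReal_ne_zero.mpr hc0.ne'
    have hs : ((-1 : ℂ) ^ k) ^ 2 = 1 := by rw [← pow_mul, pow_mul', neg_one_sq, one_pow]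
    rw [mul_pow, mul_pow, mul_pow, hs, one_mul, one_mul, ofReal_tan_sq,
      ← mul_pow_sub_one hN0, show 2 * N - 2 = (N - 1) * 2 by omega, pow_mul]
    field_simp
    ring
  rw [hC, coinRho_eq_of_pow_eq hN hc0.ne' (by rw [abs_of_pos hc0]; exact hc1.ne)
    (neg_one_pow_eq_or ℂ k) hlamN, one_sub_trace_mul_self_of_bloch, hbloch]
  push_cast
  rfl

/-- the linear entropy of the coin reduced density matrix satisfies
`1 − Tr(ρ_k²) = (1 − cos^(2N−2)θ)/2`. -/
theorem psw_coin_rho_linear_entropy (N : ℕ) [NeZero N] (hN : Odd N)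
    (θ : ℝ) (hθ : θ ∈ Set.Ioo 0 (Real.pi / 2))
    (k : ℕ) (hk : k < 2 * N)
    (lam : ℂ) (hlam : lam = Complex.exp (Real.pi * Complex.I * k / N))
    (C : ℂ) (hC : C = 2 * N / (1 + (-1 : ℂ) ^ k * (Real.cos θ : ℂ) ^ N)) :
    1 - (coinRho N θ lam C * coinRho N θ lam C).trace
      = (((1 - Real.cos θ ^ (2 * N - 2)) / 2 : ℝ) : ℂ) :=
  psw_coin_rho_linear_entropy_general N hN θ hθ k lam hlam C hC
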